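/- Let ψ: X ⇸∘ Z and φ: X ⇸∘ Y be 𝒯-modules between 𝒯-categories. Then for all 𝔷 ∈ TZ and y ∈ Y, ⟦T⟨ψ⟩(𝔷), ⟨φ⟩(y)⟧ = (φ ⟜ ψ)(𝔷, y), where ⟦−,−⟧ denotes the 𝒯-category structure of V^{|X|} and ⟨ψ⟩: Z → V^{|X|}, ⟨φ⟩: Y → V^{|X|} are the 𝒯-functors induced by ψ and φ. -/

import Mathlib

universe u

namespace Paper

/-- A strict topological theory `𝒯 = (𝕋, V, ξ)`: a commutative unital quantale `V`
(a complete lattice with a commutative monoid structure whose multiplication preserves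
suprema in each variable, with `⊥ < k`), a `Set`-monad `𝕋 = (T, e, m)` such that `T`
sends pullbacks to weak pullbacks and the naturality squares of `m` are weak pullbacks,
and a `𝕋`-algebra structure `ξ : T V → V` for which `⊗` and `k` are `𝕋`-algebra
homomorphisms and `ξ_X := ξ ∘ T(-)` is a (monotone) natural transformation
`P_V → P_V T`. -/
structure TopTheory (V : Type u) [CompleteLattice V] (T : Type u → Type u) where
  tens : V → V → V
  unit : V
  tens_comm : ∀ u v : V, tens u v = tens v u
  tens_assoc : ∀ u v w : V, tens (tens u v) w = tens u (tens v w)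
  unit_tens : ∀ v : V, tens unit v = v
  tens_sSup : ∀ (u : V) (S : Set V), tens u (sSup S) = ⨆ v ∈ S, tens u v
  bot_lt_unit : (⊥ : V) < unit
  map : ∀ {X Y : Type u}, (X → Y) → T X → T Y
  map_id : ∀ {X : Type u}, map (id : X → X) = id
  map_comp : ∀ {X Y Z : Type u} (g : Y → Z) (f : X → Y) (𝔵 : T X),
    map (g ∘ f) 𝔵 = map g (map f 𝔵)
  e : ∀ {X : Type u}, X → T X
  m : ∀ {X : Type u}, T (T X) → T X
  e_nat : ∀ {X Y : Type u} (f : X → Y) (x : X), map f (e x) = e (f x)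
  m_nat : ∀ {X Y : Type u} (f : X → Y) (𝔛 : T (T X)), map f (m 𝔛) = m (map (map f) 𝔛)
  m_e : ∀ {X : Type u} (𝔵 : T X), m (e 𝔵) = 𝔵
  m_map_e : ∀ {X : Type u} (𝔵 : T X), m (map e 𝔵) = 𝔵
  m_assoc : ∀ {X : Type u} (𝔜 : T (T (T X))), m (m 𝔜) = m (map m 𝔜)
  /-- (BC): `T` sends pullbacks to weak pullbacks. -/
  map_bc : ∀ {X Y Z : Type u} (f : X → Z) (g : Y → Z) (𝔵 : T X) (𝔶 : T Y),
    map f 𝔵 = map g 𝔶 →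
    ∃ 𝔴 : T {p : X × Y // f p.1 = g p.2},
      map (fun p => p.1.1) 𝔴 = 𝔵 ∧ map (fun p => p.1.2) 𝔴 = 𝔶
  /-- (BC): every naturality square of `m` is a weak pullback. -/
  m_bc : ∀ {X Y : Type u} (f : X → Y) (𝔜 : T (T Y)) (𝔵 : T X),
    m 𝔜 = map f 𝔵 → ∃ 𝔛 : T (T X), map (map f) 𝔛 = 𝔜 ∧ m 𝔛 = 𝔵
  xi : T V → V
  xi_e : ∀ v : V, xi (e v) = v
  xi_m : ∀ 𝔙 : T (T V), xi (m 𝔙) = xi (map xi 𝔙)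
  /-- `k : 1 → V` is a `𝕋`-algebra homomorphism. -/
  xi_unit : ∀ {X : Type u} (𝔵 : T X), xi (map (fun _ => unit) 𝔵) = unit
  /-- `⊗ : V × V → V` is a `𝕋`-algebra homomorphism. -/
  xi_tens : ∀ 𝔴 : T (V × V),
    xi (map (fun p => tens p.1 p.2) 𝔴) = tens (xi (map Prod.fst 𝔴)) (xi (map Prod.snd 𝔴))
  /-- each component `ξ_X : V^X → V^{T X}` is monotone. -/
  xi_mono : ∀ {X : Type u} (φ φ' : X → V), (∀ x, φ x ≤ φ' x) →
    ∀ 𝔵 : T X, xi (map φ 𝔵) ≤ xi (map φ' 𝔵)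
  /-- `ξ_X` is a natural transformation `P_V → P_V T`. -/
  xi_nat : ∀ {X Y : Type u} (f : X → Y) (φ : X → V) (𝔶 : T Y),
    (⨆ 𝔵 : {𝔵 : T X // map f 𝔵 = 𝔶}, xi (map φ 𝔵.1)) =
      xi (map (fun y => ⨆ x : {x : X // f x = y}, φ x.1) 𝔶)

namespace TopTheory

variable {V : Type u} [CompleteLattice V] {T : Type u → Type u}

/-- The internal hom of the quantale: `u ⊗ (-) ⊣ hom (u, -)`. -/
def ihom (𝒯 : TopTheory V T) (u w : V) : V := sSup {z | 𝒯.tens u z ≤ w}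

/-- The extension `T_ξ` of `T : Set → Set` to `V`-relations. -/
def Txi (𝒯 : TopTheory V T) {X Y : Type u} (r : X → Y → V) (𝔵 : T X) (𝔶 : T Y) : V :=
  ⨆ 𝔴 : {w : T (X × Y) // 𝒯.map Prod.fst w = 𝔵 ∧ 𝒯.map Prod.snd w = 𝔶},
    𝒯.xi (𝒯.map (fun p => r p.1 p.2) 𝔴.1)

/-- Kleisli convolution `β ∘ α = β · T_ξ α · m_X°` of `𝒯`-relations
`α : X ⇸ Y` and `β : Y ⇸ Z`. -/
def kleisli (𝒯 : TopTheory V T) {X Y Z : Type u}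
    (β : T Y → Z → V) (α : T X → Y → V) (𝔵 : T X) (z : Z) : V :=
  ⨆ 𝔛 : {𝔛 : T (T X) // 𝒯.m 𝔛 = 𝔵}, ⨆ 𝔶 : T Y, 𝒯.tens (𝒯.Txi α 𝔛.1 𝔶) (β 𝔶 z)

/-- The `𝒯`-relation `e_X° : X ⇸ X`. -/
def unitRel (𝒯 : TopTheory V T) (X : Type u) (𝔵 : T X) (x : X) : V :=
  ⨆ _ : 𝔵 = 𝒯.e x, 𝒯.unit

/-- A `𝒯`-category structure on `X`: a `𝒯`-relation `a : X ⇸ X` with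
`e_X° ≤ a` and `a ∘ a ≤ a`. -/
structure TCatStr (𝒯 : TopTheory V T) (X : Type u) where
  rel : T X → X → V
  le_refl : ∀ x : X, 𝒯.unit ≤ rel (𝒯.e x) x
  comp : ∀ (𝔵 : T X) (x : X), 𝒯.kleisli rel rel 𝔵 x ≤ rel 𝔵 x

/-- The `𝒯`-module conditions `φ ∘ a ≤ φ` and `b ∘ φ ≤ φ` for a `𝒯`-relation
`φ : X ⇸ Y` between (structures underlying) `𝒯`-categories `(X,a)` and `(Y,b)`. -/
def IsTModRel (𝒯 : TopTheory V T) {X Y : Type u}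
    (a : T X → X → V) (b : T Y → Y → V) (φ : T X → Y → V) : Prop :=
  (∀ 𝔵 y, 𝒯.kleisli φ a 𝔵 y ≤ φ 𝔵 y) ∧ (∀ 𝔵 y, 𝒯.kleisli b φ 𝔵 y ≤ φ 𝔵 y)

variable {𝒯 : TopTheory V T}

/-- `f_* = b · T f`. -/
def modStar {X Y : Type u} (b : 𝒯.TCatStr Y) (f : X → Y) (𝔵 : T X) (y : Y) : V :=
  b.rel (𝒯.map f 𝔵) y

/-- `f^* = f° · b`. -/
def modCostar {X Y : Type u} (b : 𝒯.TCatStr Y) (f : X → Y) (𝔶 : T Y) (x : X) : V :=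
  b.rel 𝔶 (f x)

/-- The extension `φ ⟜ ψ` of `φ : X ⇸∘ Y` along `ψ : X ⇸∘ Z`, given by
`(φ ⟜ ψ)(𝔷,y) = ⋀_{𝔵 ∈ T X} hom((T_ξ ψ · m_X°)(𝔵,𝔷), φ(𝔵,y))`. -/
def extend (𝒯 : TopTheory V T) {X Y Z : Type u}
    (φ : T X → Y → V) (ψ : T X → Z → V) (𝔷 : T Z) (y : Y) : V :=
  ⨅ 𝔵 : T X, 𝒯.ihom (⨆ 𝔛 : {𝔛 : T (T X) // 𝒯.m 𝔛 = 𝔵}, 𝒯.Txi ψ 𝔛.1 𝔷) (φ 𝔵 y)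

/-- A `𝒯`-functor `f : (X,a) → (Y,b)`. -/
def IsTFunctor {X Y : Type u} (a : 𝒯.TCatStr X) (b : 𝒯.TCatStr Y) (f : X → Y) : Prop :=
  ∀ (𝔵 : T X) (x : X), a.rel 𝔵 x ≤ b.rel (𝒯.map f 𝔵) (f x)

/-- A fully faithful `𝒯`-functor. -/
def FullyFaithful {X Y : Type u} (a : 𝒯.TCatStr X) (b : 𝒯.TCatStr Y) (f : X → Y) : Prop :=
  ∀ (𝔵 : T X) (x : X), a.rel 𝔵 x = b.rel (𝒯.map f 𝔵) (f x)

/-- The order `f ≤ g ⟺ f^* ≤ g^*` on `𝒯`-functors `X → (Y,b)`. -/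
def funLE {X Y : Type u} (b : 𝒯.TCatStr Y) (f g : X → Y) : Prop :=
  ∀ (𝔶 : T Y) (x : X), b.rel 𝔶 (f x) ≤ b.rel 𝔶 (g x)

/-- Equivalence `f ≅ g ⟺ f^* = g^*` of `𝒯`-functors `X → (Y,b)`. -/
def FunEquiv {X Y : Type u} (b : 𝒯.TCatStr Y) (f g : X → Y) : Prop :=
  ∀ (𝔶 : T Y) (x : X), b.rel 𝔶 (f x) = b.rel 𝔶 (g x)

/-- `f ⊣ g`:  `1_X ≤ g·f` and `f·g ≤ 1_Y`. -/
def IsAdjunction {X Y : Type u} (a : 𝒯.TCatStr X) (b : 𝒯.TCatStr Y)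
    (f : X → Y) (g : Y → X) : Prop :=
  (∀ (𝔵 : T X) (x : X), a.rel 𝔵 x ≤ a.rel 𝔵 (g (f x))) ∧
    (∀ (𝔶 : T Y) (y : Y), b.rel 𝔶 (f (g y)) ≤ b.rel 𝔶 y)

/-- A left adjoint `𝒯`-functor. -/
def IsLeftAdjoint {X Y : Type u} (a : 𝒯.TCatStr X) (b : 𝒯.TCatStr Y) (f : X → Y) : Prop :=
  IsTFunctor a b f ∧ ∃ g : Y → X, IsTFunctor b a g ∧ IsAdjunction a b f g

/-- L-separatedness: equivalent `𝒯`-functors into `X` are equal. -/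
def Separated {X : Type u} (a : 𝒯.TCatStr X) : Prop :=
  ∀ (A : Type u) (as : 𝒯.TCatStr A) (f g : A → X),
    IsTFunctor as a f → IsTFunctor as a g → FunEquiv a f g → f = g

/-- Injectivity with respect to fully faithful `𝒯`-functors. -/
def Injective {X : Type u} (a : 𝒯.TCatStr X) : Prop :=
  ∀ (A B : Type u) (as : 𝒯.TCatStr A) (bs : 𝒯.TCatStr B) (f : A → X) (i : A → B),
    IsTFunctor as a f → IsTFunctor as bs i → FullyFaithful as bs i →
      ∃ g : B → X, IsTFunctor bs a g ∧ FunEquiv a (g ∘ i) f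

/-- `g : Z → X` is the `ψ`-weighted colimit of `h : A → X`, i.e. `g_* = h_* ⟜ ψ`. -/
def IsColimit {X A Z : Type u} (a : 𝒯.TCatStr X) (h : A → X) (ψ : T A → Z → V)
    (g : Z → X) : Prop :=
  ∀ (𝔷 : T Z) (x : X), modStar a g 𝔷 x = 𝒯.extend (modStar a h) ψ 𝔷 x

/-- Cocompleteness: every weighted diagram has a colimit. -/
def Cocomplete {X : Type u} (a : 𝒯.TCatStr X) : Prop :=
  ∀ (A Z : Type u) (as : 𝒯.TCatStr A) (cs : 𝒯.TCatStr Z) (h : A → X),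
    IsTFunctor as a h → ∀ ψ : T A → Z → V, 𝒯.IsTModRel as.rel cs.rel ψ →
      ∃ g : Z → X, IsTFunctor cs a g ∧ IsColimit a h ψ g

/-- Cocontinuity: preservation of all weighted colimits. -/
def Cocontinuous {X Y : Type u} (a : 𝒯.TCatStr X) (b : 𝒯.TCatStr Y) (f : X → Y) : Prop :=
  ∀ (A Z : Type u) (as : 𝒯.TCatStr A) (cs : 𝒯.TCatStr Z) (h : A → X)
    (ψ : T A → Z → V) (g : Z → X),
    IsTFunctor as a h → 𝒯.IsTModRel as.rel cs.rel ψ → IsTFunctor cs a g →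
      IsColimit a h ψ g → IsColimit b (f ∘ h) ψ (f ∘ g)

/-- A presheaf on `(X,a)`: a `𝒯`-module `X ⇸∘ G`, where `G = (1, e_1°)`. -/
def IsPresheaf {X : Type u} (a : 𝒯.TCatStr X) (ψ : T X → V) : Prop :=
  𝒯.IsTModRel a.rel (𝒯.unitRel PUnit) (fun 𝔵 _ => ψ 𝔵)

/-- The underlying set of the presheaf `𝒯`-category `X̂`. -/
def Hat {X : Type u} (a : 𝒯.TCatStr X) : Type u := {ψ : T X → V // IsPresheaf a ψ}

/-- The `𝒯`-category structure `⟦-,-⟧` of `V^{|X|}`. -/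
def powRel (𝒯 : TopTheory V T) (X : Type u) (𝔭 : T (T X → V)) (ψ : T X → V) : V :=
  ⨅ 𝔮 : {q : T ((T X) × (T X → V)) // 𝒯.map Prod.snd q = 𝔭},
    𝒯.ihom (𝒯.xi (𝒯.map (fun p => p.2 p.1) 𝔮.1)) (ψ (𝒯.m (𝒯.map Prod.fst 𝔮.1)))

/-- `hs` is the `𝒯`-category structure on `X̂` inherited from `V^{|X|}`. -/
def IsHatStr {X : Type u} (a : 𝒯.TCatStr X) (hs : 𝒯.TCatStr (Hat a)) : Prop :=
  ∀ (𝔭 : T (Hat a)) (ψ : Hat a), hs.rel 𝔭 ψ = 𝒯.powRel X (𝒯.map Subtype.val 𝔭) ψ.1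

/-- `y` is the Yoneda functor `X → X̂`, `y x = a(-,x)`. -/
def IsYoneda {X : Type u} (a : 𝒯.TCatStr X) (y : X → Hat a) : Prop :=
  ∀ (x : X) (𝔵 : T X), (y x).1 𝔵 = a.rel 𝔵 x

/-- The underlying map `ψ ↦ ψ ∘ f^*` of `f̂ : X̂ → Ŷ`. -/
def hatMapRel {X Y : Type u} (b : 𝒯.TCatStr Y) (f : X → Y) (ψ : T X → V) (𝔶 : T Y) : V :=
  𝒯.kleisli (fun 𝔵 (_ : PUnit.{u + 1}) => ψ 𝔵) (modCostar b f) 𝔶 PUnit.unit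

/-- `fh` is the `𝒯`-functor `f̂ : X̂ → Ŷ`, with underlying map `ψ ↦ ψ ∘ f^*`. -/
def IsHatMap {X Y : Type u} (a : 𝒯.TCatStr X) (b : 𝒯.TCatStr Y) (f : X → Y)
    (fh : Hat a → Hat b) : Prop :=
  ∀ (ψ : Hat a) (𝔶 : T Y), (fh ψ).1 𝔶 = hatMapRel b f ψ.1 𝔶

/-- An inhabited `𝒯`-module: `k ≤ ⋀_y ⋁_𝔵 φ(𝔵,y)`. -/
def InhabitedMod (𝒯 : TopTheory V T) {X Y : Type u} (φ : T X → Y → V) : Prop :=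
  𝒯.unit ≤ ⨅ y : Y, ⨆ 𝔵 : T X, φ 𝔵 y

/-- A dense `𝒯`-functor: `f_*` is inhabited. -/
def Dense {X Y : Type u} (b : 𝒯.TCatStr Y) (f : X → Y) : Prop :=
  𝒯.InhabitedMod (modStar b f)

/-- The underlying set of `X⁺ = {ψ ∈ X̂ ∣ ψ inhabited}`. -/
def Plus {X : Type u} (a : 𝒯.TCatStr X) : Type u :=
  {ψ : Hat a // 𝒯.InhabitedMod (fun 𝔵 (_ : PUnit.{u + 1}) => ψ.1 𝔵)}

/-- `ps` is the `𝒯`-category structure on `X⁺` inherited from `X̂`. -/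
def IsPlusStr {X : Type u} (a : 𝒯.TCatStr X) (hs : 𝒯.TCatStr (Hat a))
    (ps : 𝒯.TCatStr (Plus a)) : Prop :=
  ∀ (𝔭 : T (Plus a)) (ψ : Plus a), ps.rel 𝔭 ψ = hs.rel (𝒯.map Subtype.val 𝔭) ψ.1

/-- Inhabited-cocompleteness: all colimits with inhabited weights exist. -/
def ICocomplete {X : Type u} (a : 𝒯.TCatStr X) : Prop :=
  ∀ (A Z : Type u) (as : 𝒯.TCatStr A) (cs : 𝒯.TCatStr Z) (h : A → X),
    IsTFunctor as a h → ∀ ψ : T A → Z → V, 𝒯.IsTModRel as.rel cs.rel ψ →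
      𝒯.InhabitedMod ψ → ∃ g : Z → X, IsTFunctor cs a g ∧ IsColimit a h ψ g

/-- Inhabited-cocontinuity: preservation of all colimits with inhabited weights. -/
def ICocontinuous {X Y : Type u} (a : 𝒯.TCatStr X) (b : 𝒯.TCatStr Y) (f : X → Y) : Prop :=
  ∀ (A Z : Type u) (as : 𝒯.TCatStr A) (cs : 𝒯.TCatStr Z) (h : A → X)
    (ψ : T A → Z → V) (g : Z → X),
    IsTFunctor as a h → 𝒯.IsTModRel as.rel cs.rel ψ → 𝒯.InhabitedMod ψ →
      IsTFunctor cs a g → IsColimit a h ψ g → IsColimit b (f ∘ h) ψ (f ∘ g)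

/-!
Both sides are infima of `hom(ξ(Tψ(𝔴)), φ(m_X(Tπ₁ 𝔴), y))` over the `𝔴 ∈ T(TX × Z)` with
`Tπ₂ 𝔴 = 𝔷`. For `φ ⟜ ψ` this is `hom(⋁ uᵢ, w) = ⋀ hom(uᵢ, w)` after unfolding `T_ξ`. For
`⟦T⟨ψ⟩(𝔷), ⟨φ⟩(y)⟧`, the indices `𝔮` with `Tπ₂ 𝔮 = T⟨ψ⟩(𝔷)` are exactly the images
`T(1 × ⟨ψ⟩)(𝔴)` of such `𝔴`, because `T` sends the pullback of `π₂` along `⟨ψ⟩` to a weak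
pullback.
-/

section Quantale

variable (𝒯)

lemma tens_iSup {ι : Sort*} (u : V) (f : ι → V) :
    𝒯.tens u (⨆ i, f i) = ⨆ i, 𝒯.tens u (f i) := by
  rw [← sSup_range, 𝒯.tens_sSup, iSup_range]

lemma iSup_tens {ι : Sort*} (f : ι → V) (u : V) :
    𝒯.tens (⨆ i, f i) u = ⨆ i, 𝒯.tens (f i) u := by
  simp only [𝒯.tens_comm _ u, tens_iSup]

lemma tens_mono_right (u : V) : Monotone (𝒯.tens u) := by
  intro z w h
  calc 𝒯.tens u z ≤ 𝒯.tens u z ⊔ 𝒯.tens u w := le_sup_left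
    _ = 𝒯.tens u (sSup {z, w}) := by rw [𝒯.tens_sSup, iSup_pair]
    _ = 𝒯.tens u w := by rw [sSup_pair, sup_eq_right.mpr h]

lemma le_ihom_iff {u w z : V} : z ≤ 𝒯.ihom u w ↔ 𝒯.tens u z ≤ w := by
  refine ⟨fun h => ?_, fun h => le_sSup h⟩
  calc 𝒯.tens u z ≤ 𝒯.tens u (𝒯.ihom u w) := 𝒯.tens_mono_right u h
    _ = ⨆ v ∈ {z | 𝒯.tens u z ≤ w}, 𝒯.tens u v := 𝒯.tens_sSup u _
    _ ≤ w := iSup₂_le fun _ hv => hv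

lemma ihom_iSup_left {ι : Sort*} (f : ι → V) (w : V) :
    𝒯.ihom (⨆ i, f i) w = ⨅ i, 𝒯.ihom (f i) w :=
  eq_of_forall_le_iff fun z => by
    simp only [le_ihom_iff, iSup_tens, iSup_le_iff, le_iInf_iff]

end Quantale

section BeckChevalley

variable (𝒯)

lemma exists_map_snd_eq_and_map_prodMap_eq {S Z W : Type u} (f : Z → W) (𝔮 : T (S × W))
    (𝔷 : T Z) (h : 𝒯.map Prod.snd 𝔮 = 𝒯.map f 𝔷) :
    ∃ 𝔴 : T (S × Z), 𝒯.map Prod.snd 𝔴 = 𝔷 ∧ 𝒯.map (Prod.map id f) 𝔴 = 𝔮 := by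
  obtain ⟨𝔭, h₁, h₂⟩ := 𝒯.map_bc Prod.snd f 𝔮 𝔷 h
  refine ⟨𝒯.map (fun p => (p.1.1.1, p.1.2)) 𝔭, ?_, ?_⟩
  · rw [← 𝒯.map_comp]
    exact h₂
  · rw [← 𝒯.map_comp, ← h₁]
    congr 1
    funext p
    exact Prod.ext rfl p.2.symm

lemma iInf_map_snd_eq_map {S Z W : Type u} (f : Z → W) (𝔷 : T Z) (F : T (S × W) → V) :
    ⨅ 𝔮 : {𝔮 : T (S × W) // 𝒯.map Prod.snd 𝔮 = 𝒯.map f 𝔷}, F 𝔮.1 =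
      ⨅ 𝔴 : {𝔴 : T (S × Z) // 𝒯.map Prod.snd 𝔴 = 𝔷}, F (𝒯.map (Prod.map id f) 𝔴.1) := by
  let g : {𝔴 : T (S × Z) // 𝒯.map Prod.snd 𝔴 = 𝔷} →
      {𝔮 : T (S × W) // 𝒯.map Prod.snd 𝔮 = 𝒯.map f 𝔷} :=
    fun 𝔴 => ⟨𝒯.map (Prod.map id f) 𝔴.1, by
      rw [← 𝒯.map_comp, show Prod.snd ∘ Prod.map id f = f ∘ Prod.snd from rfl, 𝒯.map_comp,
        𝔴.2]⟩
  have hg : Function.Surjective g := fun 𝔮 => by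
    obtain ⟨𝔴, h𝔷, h𝔮⟩ := 𝒯.exists_map_snd_eq_and_map_prodMap_eq f 𝔮.1 𝔷 𝔮.2
    exact ⟨⟨𝔴, h𝔷⟩, Subtype.ext h𝔮⟩
  exact (hg.iInf_comp fun 𝔮 => F 𝔮.1).symm

end BeckChevalley

lemma powRel_map_eq_iInf {X Z : Type u} (f : Z → T X → V) (𝔷 : T Z) (χ : T X → V) :
    𝒯.powRel X (𝒯.map f 𝔷) χ =
      ⨅ 𝔴 : {𝔴 : T (T X × Z) // 𝒯.map Prod.snd 𝔴 = 𝔷},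
        𝒯.ihom (𝒯.xi (𝒯.map (fun p => f p.2 p.1) 𝔴.1)) (χ (𝒯.m (𝒯.map Prod.fst 𝔴.1))) := by
  unfold powRel
  refine (𝒯.iInf_map_snd_eq_map f 𝔷 fun 𝔮 =>
    𝒯.ihom (𝒯.xi (𝒯.map (fun p => p.2 p.1) 𝔮)) (χ (𝒯.m (𝒯.map Prod.fst 𝔮)))).trans
    (iInf_congr fun 𝔴 => ?_)
  rw [← 𝒯.map_comp, ← 𝒯.map_comp]
  rfl

lemma extend_eq_iInf {X Y Z : Type u} (φ : T X → Y → V) (ψ : T X → Z → V) (𝔷 : T Z) (y : Y) :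
    𝒯.extend φ ψ 𝔷 y =
      ⨅ 𝔴 : {𝔴 : T (T X × Z) // 𝒯.map Prod.snd 𝔴 = 𝔷},
        𝒯.ihom (𝒯.xi (𝒯.map (fun p => ψ p.1 p.2) 𝔴.1)) (φ (𝒯.m (𝒯.map Prod.fst 𝔴.1)) y) := by
  simp only [extend, Txi, ihom_iSup_left]
  apply le_antisymm
  · refine le_iInf fun 𝔴 => ?_
    refine iInf_le_of_le (𝒯.m (𝒯.map Prod.fst 𝔴.1)) ?_
    refine iInf_le_of_le
      (⟨_, rfl⟩ : {𝔛 : T (T X) // 𝒯.m 𝔛 = 𝒯.m (𝒯.map Prod.fst 𝔴.1)}) ?_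
    exact iInf_le_of_le ⟨𝔴.1, rfl, 𝔴.2⟩ le_rfl
  · simp only [le_iInf_iff]
    rintro 𝔵 ⟨𝔛, rfl⟩ ⟨𝔴, h₁, h𝔷⟩
    refine iInf_le_of_le ⟨𝔴, h𝔷⟩ (le_of_eq ?_)
    dsimp only at h₁ ⊢
    rw [h₁]

theorem statement0_general (𝒯 : TopTheory V T) {X Y Z : Type u}
    (ψ : T X → Z → V) (φ : T X → Y → V)
    (𝔷 : T Z) (y : Y) :
    𝒯.powRel X (𝒯.map (fun z 𝔵 => ψ 𝔵 z) 𝔷) (fun 𝔵 => φ 𝔵 y) = 𝒯.extend φ ψ 𝔷 y := by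
  rw [powRel_map_eq_iInf, extend_eq_iInf]

/-- Theorem 1.6, generalised Yoneda lemma.
For `𝒯`-modules `ψ : X ⇸∘ Z` and `φ : X ⇸∘ Y`, and all `𝔷 ∈ T Z`, `y ∈ Y`:
`⟦T⟨ψ⟩(𝔷), ⟨φ⟩(y)⟧ = (φ ⟜ ψ)(𝔷, y)`. -/
theorem statement0 (𝒯 : TopTheory V T) {X Y Z : Type u}
    (a : 𝒯.TCatStr X) (b : 𝒯.TCatStr Y) (c : 𝒯.TCatStr Z)
    (ψ : T X → Z → V) (φ : T X → Y → V)
    (hψ : 𝒯.IsTModRel a.rel c.rel ψ) (hφ : 𝒯.IsTModRel a.rel b.rel φ)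
    (𝔷 : T Z) (y : Y) :
    𝒯.powRel X (𝒯.map (fun z 𝔵 => ψ 𝔵 z) 𝔷) (fun 𝔵 => φ 𝔵 y) = 𝒯.extend φ ψ 𝔷 y :=
  statement0_general 𝒯 ψ φ 𝔷 y

end TopTheory

end Paper
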